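/- Let X be a metric space containing three points that are pairwise at the same positive distance (an equilateral triangle). Then the degree 3 Steiner–Gromov ratio of X equals 3/4: sgr₃(X) = 3/4. In particular, every three-point metric space (M, ρ) satisfies mf(M, ρ) / mst(M, ρ) ≥ 3/4, with equality when all three distances are equal. -/

import Mathlib

open SimpleGraph Finset

structure IsPseudoMetric {M : Type} (ρ : M → M → ℝ) : Prop where
  nonneg : ∀ p q, 0 ≤ ρ p q
  refl : ∀ p, ρ p p = 0
  symm : ∀ p q, ρ p q = ρ q p
  triangle : ∀ p q r, ρ p r ≤ ρ p q + ρ q r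

/-- A tree joining a finite set `M`: a finite tree `G = (V, E)` with an injection `ι : M → V`
such that every vertex of degree 1 or 2 lies in the image of `M`. -/
structure Frame (M : Type) where
  V : Type
  [fin : Fintype V]
  [deq : DecidableEq V]
  G : SimpleGraph V
  [dec : DecidableRel G.Adj]
  tree : G.IsTree
  ι : M → V
  inj : Function.Injective ι
  joins : ∀ v : V, G.degree v = 1 ∨ G.degree v = 2 → v ∈ Set.range ι

attribute [instance] Frame.fin Frame.deq Frame.dec

namespace Frame

variable {M : Type}

/-- The unique path between two vertices of the tree. -/
noncomputable def path (F : Frame M) (u v : F.V) : F.G.Walk u v :=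
  (F.tree.existsUnique_path u v).exists.choose

/-- `d_ω(u,v)`: the sum of the weights of the edges of the unique path from `u` to `v`. -/
noncomputable def dist (F : Frame M) (w : Sym2 F.V → ℝ) (u v : F.V) : ℝ :=
  ((F.path u v).edges.map w).sum

/-- `ω(G)`: the total weight of all edges of the tree. -/
noncomputable def weight (F : Frame M) (w : Sym2 F.V → ℝ) : ℝ :=
  ∑ e ∈ F.G.edgeFinset, w e

/-- `(G, ω)` is a filling of `(M, ρ)`: nonnegative weights and `ρ p q ≤ d_ω(ι p, ι q)`. -/
def IsFilling (F : Frame M) (w : Sym2 F.V → ℝ) (ρ : M → M → ℝ) : Prop :=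
  (∀ e ∈ F.G.edgeFinset, 0 ≤ w e) ∧
  ∀ p q : M, ρ p q ≤ F.dist w (F.ι p) (F.ι q)

end Frame

/-- `mf(M,ρ)`: the infimum of weights of fillings of `(M, ρ)`. -/
noncomputable def mf {M : Type} (ρ : M → M → ℝ) : ℝ :=
  sInf { x | ∃ F : Frame M, ∃ w : Sym2 F.V → ℝ, F.IsFilling w ρ ∧ F.weight w = x }

/-- A minimal filling: a filling whose weight equals `mf(M,ρ)`. -/
def IsMinFilling {M : Type} (F : Frame M) (w : Sym2 F.V → ℝ) (ρ : M → M → ℝ) : Prop :=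
  F.IsFilling w ρ ∧ F.weight w = mf ρ

/- `mst(N,d)`: the length of a minimal spanning tree of a finite pseudo-metric space `(N, d)`:
the minimum over all spanning trees of the complete graph on `N` of the sum of the
lengths of their edges (each edge counted once, via the symmetrized double sum). -/
open Classical in
noncomputable def mstW {N : Type} [Fintype N] (d : N → N → ℝ) : ℝ :=
  sInf { x | ∃ H : SimpleGraph N, H.IsTree ∧
    x = (∑ u : N, ∑ v : N, if H.Adj u v then d u v else 0) / 2 }

/-- The degree `n` Steiner–Gromov ratio of a space `X` with distance function `d`. -/
noncomputable def sgrN {X : Type} (d : X → X → ℝ) (n : ℕ) : ℝ :=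
  sInf { r | ∃ S : Finset X, 2 ≤ S.card ∧ S.card ≤ n ∧
    r = mf (fun p q : S => d p.1 q.1) / mstW (fun p q : S => d p.1 q.1) }


/-! In a tree, no edge lies on all three paths joining three vertices, so a filling of a
three-point space weighs at least half its perimeter `P`; for an equilateral triangle of side `t`
the star with legs `t / 2` around a Steiner point attains `3t/2`. A spanning tree on three points
is a path with two edges, and the three such paths have total length `2P`, so `mst ≤ 2P/3`, with
`mst = 2t` for the equilateral triangle. Hence `mf / mst ≥ 3/4`, with equality for equilateral
triangles; on two points already `mf ≥ ρ = mst`. -/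

namespace SimpleGraph

variable {V : Type*} {G : SimpleGraph V}

lemma Walk.reachable_deleteEdges_or {u v : V} (W : G.Walk u v) (y : V) :
    (G.deleteEdges {s(v, y)}).Reachable u v ∨ (G.deleteEdges {s(v, y)}).Reachable u y := by
  induction W with
  | nil => exact Or.inl .rfl
  | @cons a b c hab W ih =>
    by_cases he : s(a, b) = s(c, y)
    · rcases Sym2.eq_iff.mp he with ⟨rfl, -⟩ | ⟨rfl, -⟩
      · exact Or.inl .rfl
      · exact Or.inr .rfl
    · have hab' : (G.deleteEdges {s(c, y)}).Adj a b := by simp [hab, he]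
      exact ih.imp hab'.reachable.trans hab'.reachable.trans

lemma Connected.reachable_deleteEdges_or (hG : G.Connected) (x y z : V) :
    (G.deleteEdges {s(x, y)}).Reachable z x ∨ (G.deleteEdges {s(x, y)}).Reachable z y :=
  (hG z x).some.reachable_deleteEdges_or y

lemma sum_darts_eq_two_mul_sum_edgeFinset {R : Type*} [Semiring R] [Fintype V]
    [DecidableRel G.Adj] (f : Sym2 V → R) :
    ∑ d : G.Dart, f d.edge = 2 * ∑ e ∈ G.edgeFinset, f e := by
  classical
  rw [← sum_fiberwise_of_maps_to (g := Dart.edge) (t := G.edgeFinset) (by simp [Dart.edge_mem]),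
    mul_sum]
  refine sum_congr rfl fun e he => ?_
  rw [sum_congr rfl fun d hd => congrArg f (mem_filter.mp hd).2, sum_const,
    G.dart_edge_fiber_card e (mem_edgeFinset.mp he), two_nsmul, two_mul]

lemma sum_adj_eq_two_mul_sum_edgeFinset {R : Type*} [Semiring R] [Fintype V]
    [DecidableRel G.Adj] (f : Sym2 V → R) :
    ∑ u, ∑ v, (if G.Adj u v then f s(u, v) else 0) = 2 * ∑ e ∈ G.edgeFinset, f e := by
  rw [← sum_darts_eq_two_mul_sum_edgeFinset, ← Fintype.sum_prod_type', ← sum_filter]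
  exact sum_bij' (fun xy h ↦ ⟨xy, (mem_filter.1 h).2⟩) (fun d _ ↦ (d.fst, d.snd))
    (by simp) (by simp) (by simp) (by simp) (by simp)

lemma sum_adj_starGraph [Fintype V] [DecidableEq V] (c : V) [DecidableRel (starGraph c).Adj]
    {d : V → V → ℝ} (hd : ∀ u v, d u v = d v u) (hc : d c c = 0) :
    ∑ u, ∑ v, (if (starGraph c).Adj u v then d u v else 0) = 2 * ∑ v, d c v := by
  have hsplit : ∀ u v, (if (starGraph c).Adj u v then d u v else 0) =
      (if u = c then d u v else 0) + (if v = c then d u v else 0) := by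
    intro u v
    simp only [starGraph_adj]
    split_ifs <;> grind
  simp only [hsplit, sum_add_distrib, sum_ite_irrel, sum_const_zero, sum_ite_eq', mem_univ,
    if_true, hd _ c]
  ring

end SimpleGraph

namespace Frame

variable {M : Type} (F : Frame M)

lemma path_isPath (u v : F.V) : (F.path u v).IsPath :=
  (F.tree.existsUnique_path u v).exists.choose_spec

lemma path_unique {u v : F.V} (W : F.G.Walk u v) (hW : W.IsPath) : W = F.path u v :=
  (F.tree.existsUnique_path u v).unique hW (F.path_isPath u v)

lemma dist_eq_of_isPath (w : Sym2 F.V → ℝ) {u v : F.V} (W : F.G.Walk u v) (hW : W.IsPath) :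
    F.dist w u v = (W.edges.map w).sum := by
  rw [dist, ← F.path_unique W hW]

lemma dist_self (w : Sym2 F.V → ℝ) (u : F.V) : F.dist w u u = 0 := by
  simp [F.dist_eq_of_isPath w .nil .nil]

lemma dist_eq_sum_edgeFinset (w : Sym2 F.V → ℝ) (u v : F.V) :
    F.dist w u v = ∑ e ∈ F.G.edgeFinset, if e ∈ (F.path u v).edges then w e else 0 := by
  have hedges : F.G.edgeFinset.filter (· ∈ (F.path u v).edges) = (F.path u v).edges.toFinset := by
    ext e
    simp only [mem_filter, List.mem_toFinset, mem_edgeFinset, and_iff_right_iff_imp]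
    exact fun he => (F.path u v).edges_subset_edgeSet he
  rw [dist, ← sum_filter, hedges, List.sum_toFinset _ (F.path_isPath u v).isTrail.edges_nodup]

/-- A walk avoiding the edge would shorten to a path avoiding it, contradicting the uniqueness of
paths in a tree. -/
lemma not_reachable_deleteEdges_of_mem_path {u v x y : F.V} (he : s(x, y) ∈ (F.path u v).edges) :
    ¬ (F.G.deleteEdges {s(x, y)}).Reachable u v := by
  rw [reachable_deleteEdges_iff_exists_walk]
  rintro ⟨W, hW⟩
  rw [← F.path_unique W.bypass W.bypass_isPath] at he
  exact hW (W.edges_bypass_subset_edges he)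

/-- Removing the edge splits the tree into two sides, and two of the three endpoints lie on the
same side; the path between those two avoids the edge. -/
lemma not_mem_path_edges_of_mem_path_edges (p q r : F.V) {e : Sym2 F.V}
    (hpq : e ∈ (F.path p q).edges) (hpr : e ∈ (F.path p r).edges) :
    e ∉ (F.path q r).edges := by
  induction e using Sym2.ind with
  | _ x y =>
  intro hqr
  have hside := F.tree.connected.reachable_deleteEdges_or x y
  rcases hside p with hp | hp <;> rcases hside q with hq | hq <;> rcases hside r with hr | hr
  all_goals first
    | exact F.not_reachable_deleteEdges_of_mem_path hpq (hp.trans hq.symm)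
    | exact F.not_reachable_deleteEdges_of_mem_path hpr (hp.trans hr.symm)
    | exact F.not_reachable_deleteEdges_of_mem_path hqr (hq.trans hr.symm)

lemma dist_add_dist_add_dist_le {w : Sym2 F.V → ℝ} (hw : ∀ e ∈ F.G.edgeFinset, 0 ≤ w e)
    (p q r : F.V) : F.dist w p q + F.dist w p r + F.dist w q r ≤ 2 * F.weight w := by
  simp only [dist_eq_sum_edgeFinset, weight, mul_sum, ← sum_add_distrib]
  refine sum_le_sum fun e he => ?_
  have hnot := F.not_mem_path_edges_of_mem_path_edges p q r (e := e)
  have hwe := hw e he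
  split_ifs <;> grind

end Frame

lemma IsPseudoMetric.comp {N M : Type} {ρ : M → M → ℝ} (h : IsPseudoMetric ρ) (f : N → M) :
    IsPseudoMetric fun p q => ρ (f p) (f q) :=
  ⟨fun _ _ => h.nonneg _ _, fun _ => h.refl _, fun _ _ => h.symm _ _, fun _ _ _ => h.triangle _ _ _⟩

lemma IsPseudoMetric.le_sum_edges {M : Type} {ρ : M → M → ℝ} (h : IsPseudoMetric ρ)
    {G : SimpleGraph M} {u v : M} (W : G.Walk u v) :
    ρ u v ≤ (W.edges.map (Sym2.lift ⟨ρ, h.symm⟩)).sum := by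
  induction W with
  | nil => simp [h.refl]
  | @cons a b c _ W ih =>
    simp only [Walk.edges_cons, List.map_cons, List.sum_cons, Sym2.lift_mk]
    linarith [h.triangle a b c]

section Fillings

variable {M : Type} {ρ : M → M → ℝ}

lemma mf_le_weight {F : Frame M} {w : Sym2 F.V → ℝ} (hF : F.IsFilling w ρ) :
    mf ρ ≤ F.weight w :=
  csInf_le ⟨0, by rintro _ ⟨F, w, hF, rfl⟩; exact sum_nonneg hF.1⟩ ⟨F, w, hF, rfl⟩

def Frame.ofTree [Fintype M] [DecidableEq M] (H : SimpleGraph M) [DecidableRel H.Adj]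
    (hH : H.IsTree) : Frame M where
  V := M
  G := H
  tree := hH
  ι := id
  inj := Function.injective_id
  joins v _ := ⟨v, rfl⟩

lemma Frame.isFilling_ofTree [Fintype M] [DecidableEq M] (h : IsPseudoMetric ρ)
    (H : SimpleGraph M) [DecidableRel H.Adj] (hH : H.IsTree) :
    (Frame.ofTree H hH).IsFilling (Sym2.lift ⟨ρ, h.symm⟩) ρ :=
  ⟨fun e _ => Sym2.ind (fun _ _ => h.nonneg _ _) e, fun _ _ => h.le_sum_edges _⟩

lemma exists_isFilling [Fintype M] [Nonempty M] (h : IsPseudoMetric ρ) :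
    ∃ F : Frame M, ∃ w : Sym2 F.V → ℝ, F.IsFilling w ρ := by
  classical
  let c : M := Classical.arbitrary M
  exact ⟨_, _, Frame.isFilling_ofTree h (starGraph c) (isTree_starGraph c)⟩

lemma add_add_le_two_mul_mf [Fintype M] [Nonempty M] (h : IsPseudoMetric ρ) (p q r : M) :
    ρ p q + ρ p r + ρ q r ≤ 2 * mf ρ := by
  obtain ⟨F₀, w₀, hF₀⟩ := exists_isFilling h
  suffices (ρ p q + ρ p r + ρ q r) / 2 ≤ mf ρ by linarith
  refine le_csInf ⟨_, F₀, w₀, hF₀, rfl⟩ ?_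
  rintro _ ⟨F, w, ⟨hw, hρ⟩, rfl⟩
  linarith [F.dist_add_dist_add_dist_le hw (F.ι p) (F.ι q) (F.ι r), hρ p q, hρ p r, hρ q r]

/-- The centre `none` has degree `card M`, and vertices of degree 1 or 2 must be points of `M`:
hence `3 ≤ card M`. -/
abbrev Frame.steinerStar (M : Type) [Fintype M] [DecidableEq M] (hM : 3 ≤ Fintype.card M) :
    Frame M where
  V := Option M
  G := starGraph none
  tree := isTree_starGraph none
  ι := some
  inj := Option.some_injective M
  joins v hv := by
    cases v with
    | none =>
      rw [degree_starGraph_center, Fintype.card_option] at hv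
      omega
    | some p => exact ⟨p, rfl⟩

/-- The leg from the centre `none` to `some p` gets weight `r p`. -/
def legWeight (r : M → ℝ) : Sym2 (Option M) → ℝ :=
  Sym2.lift ⟨fun u v => u.elim 0 r + v.elim 0 r, fun _ _ => add_comm _ _⟩

section SteinerStar

variable [Fintype M] [DecidableEq M] (hM : 3 ≤ Fintype.card M) (r : M → ℝ)

lemma Frame.steinerStar_dist {p q : M} (hpq : p ≠ q) :
    (Frame.steinerStar M hM).dist (legWeight r) (some p) (some q) = r p + r q := by
  let W : (starGraph (none : Option M)).Walk (some p) (some q) :=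
    .cons (starGraph_center_adj' (Option.some_ne_none p).symm)
      (.cons (starGraph_center_adj (Option.some_ne_none q).symm) .nil)
  rw [Frame.dist_eq_of_isPath _ _ W (by simp [W, hpq])]
  simp [W, legWeight]

lemma Frame.steinerStar_weight :
    (Frame.steinerStar M hM).weight (legWeight r) = ∑ p, r p := by
  have hedges := sum_adj_eq_two_mul_sum_edgeFinset (G := starGraph (none : Option M)) (legWeight r)
  have hstar := sum_adj_starGraph (none : Option M) (d := fun u v => legWeight r s(u, v))
    (fun _ _ => by simp [legWeight, add_comm]) (by simp [legWeight])
  have hlegs : ∑ v, legWeight r s(none, v) = ∑ p, r p := by simp [Fintype.sum_option, legWeight]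
  rw [hstar, hlegs] at hedges
  simp only [Frame.weight]
  linarith

end SteinerStar

lemma mf_le_sum_of_le_add [Fintype M] (h : IsPseudoMetric ρ) (hM : 3 ≤ Fintype.card M)
    {r : M → ℝ} (hr : ∀ p, 0 ≤ r p) (hρ : ∀ p q, p ≠ q → ρ p q ≤ r p + r q) :
    mf ρ ≤ ∑ p, r p := by
  classical
  rw [← Frame.steinerStar_weight hM r]
  refine mf_le_weight ⟨fun e _ => ?_, fun p q => ?_⟩
  · have hleg : ∀ o : Option M, 0 ≤ o.elim 0 r := fun o => by cases o <;> simp [hr]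
    induction e using Sym2.ind with
    | _ u v => exact add_nonneg (hleg u) (hleg v)
  · by_cases hpq : p = q
    · rw [hpq, h.refl, Frame.dist_self]
    · exact (hρ p q hpq).trans_eq (Frame.steinerStar_dist hM r hpq).symm

end Fillings

section SpanningTrees

variable {N : Type} [Fintype N] {d : N → N → ℝ}

open Classical in
noncomputable def treeLength (d : N → N → ℝ) (H : SimpleGraph N) : ℝ :=
  (∑ u, ∑ v, if H.Adj u v then d u v else 0) / 2

lemma mstW_eq_sInf_treeLength :
    mstW d = sInf { x | ∃ H : SimpleGraph N, H.IsTree ∧ x = treeLength d H } :=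
  rfl

lemma treeLength_eq (H : SimpleGraph N) [DecidableRel H.Adj] :
    treeLength d H = (∑ u, ∑ v, if H.Adj u v then d u v else 0) / 2 := by
  unfold treeLength
  congr!

lemma treeLength_nonneg (hd : ∀ p q, 0 ≤ d p q) (H : SimpleGraph N) : 0 ≤ treeLength d H := by
  classical
  rw [treeLength_eq]
  exact div_nonneg (sum_nonneg fun u _ => sum_nonneg fun v _ => by split_ifs <;> simp [hd])
    zero_le_two

lemma treeLength_starGraph [DecidableEq N] (hd : ∀ u v, d u v = d v u) {c : N} (hc : d c c = 0) :
    treeLength d (starGraph c) = ∑ v, d c v := by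
  rw [treeLength_eq, sum_adj_starGraph c hd hc]
  ring

lemma le_treeLength {H : SimpleGraph N} (hH : H.IsTree) {t : ℝ}
    (ht : ∀ p q, H.Adj p q → t ≤ d p q) : ((Fintype.card N : ℝ) - 1) * t ≤ treeLength d H := by
  classical
  have hcount := sum_adj_eq_two_mul_sum_edgeFinset (G := H) fun _ => t
  rw [sum_const, nsmul_eq_mul] at hcount
  have hedges : (H.edgeFinset.card : ℝ) = Fintype.card N - 1 := by
    rw [← hH.card_edgeFinset]; push_cast; ring
  rw [hedges] at hcount
  have hle : ∑ u, ∑ v, (if H.Adj u v then t else 0) ≤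
      ∑ u, ∑ v, (if H.Adj u v then d u v else 0) :=
    sum_le_sum fun u _ => sum_le_sum fun v _ => by split_ifs with huv <;> simp [ht u v, huv]
  rw [treeLength_eq]
  linarith

lemma mstW_le_sum_dist (h : IsPseudoMetric d) (c : N) : mstW d ≤ ∑ v, d c v := by
  classical
  rw [mstW_eq_sInf_treeLength, ← treeLength_starGraph h.symm (h.refl c)]
  exact csInf_le ⟨0, by rintro _ ⟨H, -, rfl⟩; exact treeLength_nonneg h.nonneg H⟩
    ⟨_, isTree_starGraph c, rfl⟩

lemma le_mstW [Nonempty N] {t : ℝ} (ht : ∀ p q, p ≠ q → t ≤ d p q) :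
    ((Fintype.card N : ℝ) - 1) * t ≤ mstW d := by
  rw [mstW_eq_sInf_treeLength]
  refine le_csInf ⟨_, _, isTree_starGraph (Classical.arbitrary N), rfl⟩ ?_
  rintro _ ⟨H, hH, rfl⟩
  exact le_treeLength hH fun p q hpq => ht p q hpq.ne

lemma mstW_pos (hpos : ∀ p q, p ≠ q → 0 < d p q) (hN : 1 < Fintype.card N) : 0 < mstW d := by
  obtain ⟨x, y, hxy⟩ := Fintype.exists_pair_of_one_lt_card hN
  obtain ⟨m, hm, hmin⟩ := exists_min_image univ.offDiag (fun m => d m.1 m.2) ⟨(x, y), by simpa⟩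
  have : Nonempty N := ⟨x⟩
  have hbound := le_mstW (d := d) fun p q hpq => hmin (p, q) (by simpa)
  have hN' : (1 : ℝ) < Fintype.card N := by exact_mod_cast hN
  have := hpos m.1 m.2 (by simpa using hm)
  nlinarith

end SpanningTrees

section SmallSpaces

variable {M : Type} [Fintype M] {ρ : M → M → ℝ}

lemma sum_eq_of_univ_eq_three [DecidableEq M] {a b c : M} (hab : a ≠ b) (hac : a ≠ c) (hbc : b ≠ c)
    (huniv : (univ : Finset M) = {a, b, c}) (f : M → ℝ) : ∑ x, f x = f a + f b + f c := by
  rw [huniv, sum_insert (by simp [hab, hac]), sum_pair hbc, add_assoc]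

lemma one_le_mf_div_mstW_of_card_eq_two (h : IsPseudoMetric ρ)
    (hpos : ∀ p q, p ≠ q → 0 < ρ p q) (hM : Fintype.card M = 2) : 1 ≤ mf ρ / mstW ρ := by
  classical
  obtain ⟨a, b, hab, huniv⟩ := card_eq_two.mp (hM ▸ card_univ)
  have : Nonempty M := ⟨a⟩
  have hmf := add_add_le_two_mul_mf h a b b
  have hmst := mstW_le_sum_dist h a
  rw [huniv, sum_pair hab] at hmst
  rw [one_le_div (mstW_pos hpos (by omega))]
  linarith [h.refl a, h.refl b]

/-- Every filling weighs at least half the perimeter, while the three stars (paths with two edges)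
have total length twice the perimeter. -/
lemma three_quarters_le_mf_div_mstW (h : IsPseudoMetric ρ)
    (hpos : ∀ p q, p ≠ q → 0 < ρ p q) (hM : Fintype.card M = 3) : 3 / 4 ≤ mf ρ / mstW ρ := by
  classical
  obtain ⟨a, b, c, hab, hac, hbc, huniv⟩ := card_eq_three.mp (hM ▸ card_univ)
  have : Nonempty M := ⟨a⟩
  have hsum := sum_eq_of_univ_eq_three hab hac hbc huniv
  have hmf := add_add_le_two_mul_mf h a b c
  have hmst_a := mstW_le_sum_dist h a
  have hmst_b := mstW_le_sum_dist h b
  have hmst_c := mstW_le_sum_dist h c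
  rw [hsum] at hmst_a hmst_b hmst_c
  rw [le_div_iff₀ (mstW_pos hpos (by omega))]
  linarith [h.refl a, h.refl b, h.refl c, h.symm a b, h.symm a c, h.symm b c]

lemma mf_div_mstW_eq_of_equilateral (h : IsPseudoMetric ρ)
    (hpos : ∀ p q, p ≠ q → 0 < ρ p q) (hM : Fintype.card M = 3)
    (heq : ∀ p q p' q', p ≠ q → p' ≠ q' → ρ p q = ρ p' q') : mf ρ / mstW ρ = 3 / 4 := by
  classical
  obtain ⟨a, b, c, hab, hac, hbc, huniv⟩ := card_eq_three.mp (hM ▸ card_univ)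
  have : Nonempty M := ⟨a⟩
  obtain ⟨t, ht⟩ : ∃ t, ∀ p q, p ≠ q → ρ p q = t := ⟨ρ a b, fun p q hpq => heq p q a b hpq hab⟩
  have htpos : 0 < t := ht a b hab ▸ hpos a b hab
  have hmf_le : mf ρ ≤ ∑ _p : M, t / 2 :=
    mf_le_sum_of_le_add h (by omega) (fun _ => by positivity)
      fun p q hpq => by rw [ht p q hpq]; linarith
  rw [sum_const, card_univ, hM, nsmul_eq_mul] at hmf_le
  have hmf_ge := add_add_le_two_mul_mf h a b c
  have hmst_le := mstW_le_sum_dist h a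
  rw [sum_eq_of_univ_eq_three hab hac hbc huniv, h.refl] at hmst_le
  have hmst_ge := le_mstW (d := ρ) (t := t) fun p q hpq => (ht p q hpq).ge
  rw [hM] at hmst_ge
  rw [ht a b hab, ht a c hac, ht b c hbc] at hmf_ge
  rw [ht a b hab, ht a c hac] at hmst_le
  push_cast at hmf_le hmst_ge
  rw [div_eq_iff (by linarith)]
  linarith

end SmallSpaces

theorem stmt17 {X : Type} (d : X → X → ℝ) (hd : IsPseudoMetric d)
    (hpos : ∀ p q : X, p ≠ q → 0 < d p q)
    (a b c : X) (hab : a ≠ b) (hac : a ≠ c) (hbc : b ≠ c)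
    (h1 : d a b = d a c) (h2 : d a c = d b c) :
    sgrN d 3 = 3 / 4 ∧
    ∀ (M : Type) [Fintype M] (ρ : M → M → ℝ), IsPseudoMetric ρ →
      (∀ p q : M, p ≠ q → 0 < ρ p q) → Fintype.card M = 3 →
      3 / 4 ≤ mf ρ / mstW ρ ∧
      ((∀ p q p' q' : M, p ≠ q → p' ≠ q' → ρ p q = ρ p' q') →
        mf ρ / mstW ρ = 3 / 4) := by
  classical
  have hposS : ∀ S : Finset X, ∀ p q : S, p ≠ q → 0 < d p q :=
    fun S p q hpq => hpos p q (Subtype.coe_injective.ne hpq)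
  have htriangle : ({a, b, c} : Finset X).card = 3 :=
    card_eq_three.mpr ⟨a, b, c, hab, hac, hbc, rfl⟩
  have hequilateral : ∀ x ∈ ({a, b, c} : Finset X), ∀ y ∈ ({a, b, c} : Finset X),
      x ≠ y → d x y = d a b := by
    simp only [mem_insert, mem_singleton]
    rintro x (rfl | rfl | rfl) y (rfl | rfl | rfl) hxy <;>
      first | exact absurd rfl hxy | linarith [hd.symm x y]
  refine ⟨IsLeast.csInf_eq ⟨⟨{a, b, c}, by omega, htriangle.le, ?_⟩, ?_⟩,
    fun M _ ρ hρ hposM hM =>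
      ⟨three_quarters_le_mf_div_mstW hρ hposM hM, mf_div_mstW_eq_of_equilateral hρ hposM hM⟩⟩
  · refine (mf_div_mstW_eq_of_equilateral (hd.comp _) (hposS _) (by simpa using htriangle)
      fun p q p' q' hpq hpq' => ?_).symm
    rw [hequilateral _ p.2 _ q.2 (Subtype.coe_injective.ne hpq),
      hequilateral _ p'.2 _ q'.2 (Subtype.coe_injective.ne hpq')]
  · rintro _ ⟨S, hS2, hS3, rfl⟩
    obtain hS | hS : S.card = 2 ∨ S.card = 3 := by omega
    · exact le_trans (by norm_num)
        (one_le_mf_div_mstW_of_card_eq_two (hd.comp _) (hposS S) (by simpa using hS))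
    · exact three_quarters_le_mf_div_mstW (hd.comp _) (hposS S) (by simpa using hS)
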